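/- For all n, k ≥ 0 and real α, (d/dz)^k [ z^{-α} e^{z} L_n^{-α}(-z) ] = (n+1)(n+2)···(n+k) · z^{-α-k} e^{z} L_{n+k}^{-α-k}(-z) for z > 0. -/

import Mathlib

/-!
Write `f_n^β(t) = t^β e^t L_n^β(-t)`, so the theorem concerns `f_n^{-α}`. For `t > 0`, `f_n^β` is a
finite combination `∑ c_{n,β,k} t^{k+β} e^t`, and differentiating termwise gives
`f_n^β' = (n+1) f_{n+1}^{β-1}`, which amounts to the coefficient identity
`(n+1) c_{n+1,β-1,k} = (β+k) c_{n,β,k} + c_{n,β,k-1}`. Iterating `k` times produces the rising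
factorial `(n+1)_k`.
-/

open Finset Real

/-- Generalized Laguerre polynomial `L_n^α(z) = ∑_{k=0}^n (-1)^k binom(n+α, n-k) z^k / k!`,
where `binom(n+α, n-k) = (∏_{j=k+1}^{n} (α+j)) / (n-k)!`. -/
noncomputable def laguerre (n : ℕ) (α : ℝ) (z : ℝ) : ℝ :=
  ∑ k ∈ Finset.range (n + 1),
    (-1 : ℝ) ^ k * ((∏ j ∈ Finset.Ico (k + 1) (n + 1), (α + (j : ℝ))) /
      ((n - k).factorial * k.factorial)) * z ^ k

/-- The coefficient of `z^k` in `L_n^β(-z)`. -/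
noncomputable def laguerreCoeff (n : ℕ) (β : ℝ) (k : ℕ) : ℝ :=
  (∏ j ∈ Ico (k + 1) (n + 1), (β + (j : ℝ))) / ((n - k).factorial * k.factorial)

noncomputable def laguerreShadow (n : ℕ) (β : ℝ) (t : ℝ) : ℝ :=
  t ^ β * exp t * laguerre n β (-t)

section Coefficients

variable (n : ℕ) (β : ℝ)

theorem laguerre_neg_eq_sum (z : ℝ) :
    laguerre n β (-z) = ∑ k ∈ range (n + 1), laguerreCoeff n β k * z ^ k := by
  refine sum_congr rfl fun k _ => ?_
  rw [laguerreCoeff, neg_pow z, mul_mul_mul_comm, ← mul_pow]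
  norm_num

theorem prod_Ico_sub_one_add_eq (k : ℕ) :
    ∏ j ∈ Ico (k + 1) (n + 2), (β - 1 + (j : ℝ)) = ∏ j ∈ Ico k (n + 1), (β + (j : ℝ)) := by
  rw [prod_Ico_eq_prod_range, prod_Ico_eq_prod_range, show n + 2 - (k + 1) = n + 1 - k by omega]
  refine prod_congr rfl fun j _ => ?_
  push_cast
  ring

theorem succ_mul_laguerreCoeff_sub_one_zero :
    ((n : ℝ) + 1) * laguerreCoeff (n + 1) (β - 1) 0 = β * laguerreCoeff n β 0 := by
  rw [laguerreCoeff, laguerreCoeff, prod_Ico_sub_one_add_eq,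
    prod_eq_prod_Ico_succ_bot (by omega) (fun j => β + (j : ℝ))]
  simp [Nat.factorial_succ]
  field_simp

theorem succ_mul_laguerreCoeff_sub_one_succ_self :
    ((n : ℝ) + 1) * laguerreCoeff (n + 1) (β - 1) (n + 1) = laguerreCoeff n β n := by
  simp [laguerreCoeff, Nat.factorial_succ]
  field_simp

theorem succ_mul_laguerreCoeff_sub_one_succ {k : ℕ} (hk : k < n) :
    ((n : ℝ) + 1) * laguerreCoeff (n + 1) (β - 1) (k + 1) =
      (β + (k + 1)) * laguerreCoeff n β (k + 1) + laguerreCoeff n β k := by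
  obtain ⟨d, rfl⟩ : ∃ d, n = d + k + 1 := ⟨n - (k + 1), by omega⟩
  rw [laguerreCoeff, laguerreCoeff, laguerreCoeff, prod_Ico_sub_one_add_eq,
    prod_eq_prod_Ico_succ_bot (by omega) (fun j => β + (j : ℝ)),
    show d + k + 1 + 1 - (k + 1) = d + 1 by omega, show d + k + 1 - k = d + 1 by omega,
    show d + k + 1 - (k + 1) = d by omega, Nat.factorial_succ d, Nat.factorial_succ k]
  push_cast
  field_simp
  ring

theorem succ_mul_sum_laguerreCoeff_sub_one (z : ℝ) :
    ((n : ℝ) + 1) * ∑ k ∈ range (n + 2), laguerreCoeff (n + 1) (β - 1) k * z ^ k =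
      ∑ k ∈ range (n + 1), laguerreCoeff n β k * ((β + k) * z ^ k + z ^ (k + 1)) := by
  simp only [mul_add, sum_add_distrib, mul_sum]
  rw [sum_range_succ', sum_range_succ, sum_range_succ' (fun k => laguerreCoeff n β k * _),
    sum_range_succ (fun k => laguerreCoeff n β k * z ^ (k + 1))]
  have hmid : ∀ k ∈ range n,
      ((n : ℝ) + 1) * (laguerreCoeff (n + 1) (β - 1) (k + 1) * z ^ (k + 1)) =
        laguerreCoeff n β (k + 1) * ((β + (k + 1 : ℕ)) * z ^ (k + 1)) +
          laguerreCoeff n β k * z ^ (k + 1) := fun k hk => by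
    rw [← mul_assoc, succ_mul_laguerreCoeff_sub_one_succ n β (mem_range.mp hk)]
    push_cast
    ring
  rw [sum_congr rfl hmid, sum_add_distrib]
  linear_combination z ^ (n + 1) * succ_mul_laguerreCoeff_sub_one_succ_self n β +
    succ_mul_laguerreCoeff_sub_one_zero n β

end Coefficients

theorem laguerreShadow_eq_sum (n : ℕ) (β : ℝ) {t : ℝ} (ht : 0 < t) :
    laguerreShadow n β t = ∑ k ∈ range (n + 1), laguerreCoeff n β k * (t ^ (k + β) * exp t) := by
  rw [laguerreShadow, laguerre_neg_eq_sum, mul_sum]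
  refine sum_congr rfl fun k _ => ?_
  rw [add_comm, rpow_add ht, rpow_natCast]
  ring

theorem hasDerivAt_laguerreShadow (n : ℕ) (β : ℝ) {z : ℝ} (hz : 0 < z) :
    HasDerivAt (laguerreShadow n β) ((n + 1) * laguerreShadow (n + 1) (β - 1) z) z := by
  have hsum : HasDerivAt (fun t => ∑ k ∈ range (n + 1), laguerreCoeff n β k * (t ^ (k + β) * exp t))
      (∑ k ∈ range (n + 1), laguerreCoeff n β k *
        ((k + β) * z ^ (k + β - 1) * exp z + z ^ (k + β) * exp z)) z :=
    HasDerivAt.fun_sum fun k _ =>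
      ((hasDerivAt_rpow_const (Or.inl hz.ne')).mul (hasDerivAt_exp z)).const_mul _
  have hderiv : ∑ k ∈ range (n + 1), laguerreCoeff n β k *
        ((k + β) * z ^ (k + β - 1) * exp z + z ^ (k + β) * exp z) =
      (n + 1) * laguerreShadow (n + 1) (β - 1) z := by
    rw [laguerreShadow, laguerre_neg_eq_sum, mul_left_comm, succ_mul_sum_laguerreCoeff_sub_one,
      mul_sum]
    refine sum_congr rfl fun k _ => ?_
    rw [show (k : ℝ) + β - 1 = β - 1 + k by ring, show (k : ℝ) + β = β - 1 + (k + 1 : ℕ) by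
      push_cast; ring, rpow_add hz, rpow_add hz, rpow_natCast, rpow_natCast]
    push_cast
    ring
  refine hderiv ▸ hsum.congr_of_eventuallyEq ?_
  filter_upwards [Ioi_mem_nhds hz] with t ht using laguerreShadow_eq_sum n β ht

theorem iteratedDeriv_laguerreShadow (n k : ℕ) (β : ℝ) {z : ℝ} (hz : 0 < z) :
    iteratedDeriv k (laguerreShadow n β) z =
      (∏ i ∈ range k, ((n : ℝ) + 1 + i)) * laguerreShadow (n + k) (β - k) z := by
  induction k generalizing z with
  | zero => simp
  | succ k ih =>
    have hev : iteratedDeriv k (laguerreShadow n β) =ᶠ[nhds z]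
        fun t => (∏ i ∈ range k, ((n : ℝ) + 1 + i)) * laguerreShadow (n + k) (β - k) t := by
      filter_upwards [Ioi_mem_nhds hz] with t ht using ih ht
    rw [iteratedDeriv_succ, hev.deriv_eq, ((hasDerivAt_laguerreShadow _ _ hz).const_mul _).deriv,
      prod_range_succ, ← add_assoc]
    push_cast
    ring_nf

/-- For all `n, k ≥ 0`, real `α`, and `z > 0`,
`(d/dz)^k [z^{-α} e^z L_n^{-α}(-z)] = (n+1)_k z^{-α-k} e^z L_{n+k}^{-α-k}(-z)`. -/
theorem laguerre_iteratedDeriv_shadow_conj (n k : ℕ) (α : ℝ) (z : ℝ) (hz : 0 < z) :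
    iteratedDeriv k (fun t : ℝ => t ^ (-α) * Real.exp t * laguerre n (-α) (-t)) z =
      (∏ i ∈ Finset.range k, ((n : ℝ) + 1 + i)) * z ^ (-α - k) * Real.exp z *
        laguerre (n + k) (-α - k) (-z) := by
  exact (iteratedDeriv_laguerreShadow n k (-α) hz).trans (by rw [laguerreShadow]; ring)
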